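/- For all integers a, b, L with a, L ≥ 0, ∑_{k=0}^{L} q^{k(k+b)} [L choose k]_q [a choose k+b]_q = [a+L choose b+L]_q. -/

import Mathlib

open Finset

/-- The variable `q`, realized as the generator of the field of rational functions over `ℚ`. -/
noncomputable def qq : RatFunc ℚ := RatFunc.X

/-- `(x)_n = ∏_{j=1}^n (1 - x^j)`. -/
noncomputable def qPoch (x : RatFunc ℚ) (n : ℕ) : RatFunc ℚ :=
  ∏ j ∈ Finset.range n, (1 - x ^ (j + 1))

/-- Gaussian binomial coefficient `[n choose k]_x`, zero unless `0 ≤ k ≤ n`. -/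
noncomputable def qBin (x : RatFunc ℚ) (n k : ℤ) : RatFunc ℚ :=
  if 0 ≤ k ∧ k ≤ n then qPoch x n.toNat / (qPoch x k.toNat * qPoch x (n - k).toNat) else 0

/-- The `q`-trinomial coefficient `[L, b; a]_2` in base `x`. -/
noncomputable def qTri (x : RatFunc ℚ) (L : ℕ) (b a : ℤ) : RatFunc ℚ :=
  ∑ k ∈ Finset.range (L + 1),
    x ^ ((k : ℤ) * (k + b)) * qBin x (L : ℤ) (k : ℤ) * qBin x ((L : ℤ) - k) ((k : ℤ) + a)

/-- The `q`-trinomial `T_n(L, a)`, written in terms of `s = q^{1/2}` (so the base is `s^2`):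
`T_n(L,a) = ∑ s^{r(r-n)} (s²)_L / ((s²)_{(L-a-r)/2} (s²)_{(L+a-r)/2} (s²)_r)`,
the sum over `r ≥ 0` with `L - a - r` even and `r ≤ L - |a|`; zero for `|a| > L`. -/
noncomputable def qT (s : RatFunc ℚ) (n : ℤ) (L : ℕ) (a : ℤ) : RatFunc ℚ :=
  ∑ r ∈ Finset.range (L + 1),
    if Even ((L : ℤ) - a - r) ∧ (r : ℤ) ≤ (L : ℤ) - |a| then
      s ^ ((r : ℤ) * ((r : ℤ) - n)) * qPoch (s ^ 2) L /
        (qPoch (s ^ 2) (((L : ℤ) - a - r) / 2).toNat *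
          qPoch (s ^ 2) (((L : ℤ) + a - r) / 2).toNat * qPoch (s ^ 2) r)
    else 0

/-- The Cartan matrix of the Lie algebra `A_n`. -/
def cartanA (n : ℕ) (i j : Fin n) : ℤ :=
  if i = j then 2 else if |(i : ℤ) - (j : ℤ)| = 1 then -1 else 0

/-!
Induction on `L`. The `q`-Pascal rule `[L+1, k] = [L, k] + q^(L+1-k) [L, k-1]` splits the sum
for `L + 1` into the sums for `L` with parameters `b` and `b + 1` (the latter after the shift
`k ↦ k + 1`, which pulls out the factor `q^(b+L+1)`). By induction these are `[a+L, b+L]` and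
`[a+L, b+L+1]`, and the other `q`-Pascal rule `[n+1, j] = [n, j-1] + q^j [n, j]` adds them up
to `[a+L+1, b+L+1]`.
-/

section GaussianBinomial

variable {x : RatFunc ℚ}

theorem qPoch_zero (x : RatFunc ℚ) : qPoch x 0 = 1 := prod_range_zero _

theorem qPoch_succ (x : RatFunc ℚ) (n : ℕ) : qPoch x (n + 1) = qPoch x n * (1 - x ^ (n + 1)) :=
  prod_range_succ _ _

theorem qPoch_ne_zero (hx : ∀ j : ℕ, x ^ (j + 1) ≠ 1) (n : ℕ) : qPoch x n ≠ 0 :=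
  prod_ne_zero_iff.2 fun j _ => sub_ne_zero.2 (hx j).symm

theorem qBin_eq_zero {n k : ℤ} (h : ¬(0 ≤ k ∧ k ≤ n)) : qBin x n k = 0 := if_neg h

theorem qBin_of_neg {n k : ℤ} (hk : k < 0) : qBin x n k = 0 := qBin_eq_zero (by omega)

theorem qBin_of_lt {n k : ℤ} (hnk : n < k) : qBin x n k = 0 := qBin_eq_zero (by omega)

theorem qBin_natCast {n k : ℕ} (h : k ≤ n) :
    qBin x n k = qPoch x n / (qPoch x k * qPoch x (n - k)) := by
  rw [qBin, if_pos (by omega)]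
  simp only [Int.toNat_natCast]
  rw [← Nat.cast_sub h, Int.toNat_natCast]

theorem qBin_sub_right (n k : ℤ) : qBin x n (n - k) = qBin x n k := by
  by_cases h : 0 ≤ k ∧ k ≤ n
  · rw [qBin, qBin, if_pos (by omega), if_pos h, sub_sub_cancel, mul_comm]
  · rw [qBin_eq_zero h, qBin_eq_zero (by omega)]

theorem qBin_self (hx : ∀ j : ℕ, x ^ (j + 1) ≠ 1) {n : ℤ} (hn : 0 ≤ n) :
    qBin x n n = 1 := by
  rw [qBin, if_pos ⟨hn, le_rfl⟩, sub_self, Int.toNat_zero, qPoch_zero, mul_one,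
    div_self (qPoch_ne_zero hx _)]

theorem qBin_zero_right (hx : ∀ j : ℕ, x ^ (j + 1) ≠ 1) {n : ℤ} (hn : 0 ≤ n) :
    qBin x n 0 = 1 := by
  simpa [qBin_self hx hn] using qBin_sub_right (x := x) n n

theorem qBin_add_two_add_one (hx : ∀ j : ℕ, x ^ (j + 1) ≠ 1) (m e : ℕ) :
    qBin x (m + e + 2 : ℕ) (m + 1 : ℕ) =
      qBin x (m + e + 1 : ℕ) m + x ^ (m + 1) * qBin x (m + e + 1 : ℕ) (m + 1 : ℕ) := by
  rw [qBin_natCast (by omega), qBin_natCast (by omega), qBin_natCast (by omega),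
    show m + e + 2 - (m + 1) = e + 1 by omega, show m + e + 1 - m = e + 1 by omega,
    show m + e + 1 - (m + 1) = e by omega, qPoch_succ x (m + e + 1), qPoch_succ x m,
    qPoch_succ x e]
  have := qPoch_ne_zero hx (m + e + 1)
  have := qPoch_ne_zero hx m
  have := qPoch_ne_zero hx e
  have := sub_ne_zero.2 (hx m).symm
  have := sub_ne_zero.2 (hx e).symm
  field_simp
  ring

theorem qBin_add_one_left (hx : ∀ j : ℕ, x ^ (j + 1) ≠ 1) {n : ℤ} (hn : 0 ≤ n) (k : ℤ) :
    qBin x (n + 1) k = qBin x n (k - 1) + x ^ k * qBin x n k := by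
  rcases lt_or_ge k 0 with hk | hk
  · rw [qBin_of_neg hk, qBin_of_neg hk, qBin_of_neg (by omega)]
    ring
  rcases lt_or_ge (n + 1) k with hkn | hkn
  · rw [qBin_of_lt hkn, qBin_of_lt (by omega), qBin_of_lt (by omega)]
    ring
  obtain rfl | hk := hk.eq_or_lt
  · rw [qBin_zero_right hx (by omega), qBin_zero_right hx hn, qBin_of_neg (by omega), zpow_zero]
    ring
  obtain rfl | hkn := hkn.eq_or_lt
  · rw [add_sub_cancel_right, qBin_self hx (by omega), qBin_self hx hn, qBin_of_lt (by omega)]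
    ring
  lift n to ℕ using hn
  obtain ⟨m, rfl⟩ : ∃ m : ℕ, k = m + 1 := ⟨(k - 1).toNat, by omega⟩
  obtain ⟨e, rfl⟩ : ∃ e : ℕ, n = m + e + 1 := ⟨n - m - 1, by omega⟩
  rw [add_sub_cancel_right,
    show ((m + e + 1 : ℕ) : ℤ) + 1 = (m + e + 2 : ℕ) by push_cast; ring,
    show (m : ℤ) + 1 = (m + 1 : ℕ) by push_cast; ring, zpow_natCast]
  exact qBin_add_two_add_one hx m e

theorem qBin_add_one_left' (hx : ∀ j : ℕ, x ^ (j + 1) ≠ 1) {n : ℤ} (hn : 0 ≤ n)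
    (k : ℤ) : qBin x (n + 1) k = qBin x n k + x ^ (n + 1 - k) * qBin x n (k - 1) := by
  calc qBin x (n + 1) k = qBin x (n + 1) (n + 1 - k) := (qBin_sub_right _ _).symm
    _ = qBin x n (n - k) + x ^ (n + 1 - k) * qBin x n (n - (k - 1)) := by
      rw [qBin_add_one_left hx hn]
      ring_nf
    _ = _ := by rw [qBin_sub_right, qBin_sub_right]

theorem qBin_add_eq_sum (hx : ∀ j : ℕ, x ^ (j + 1) ≠ 1) (hx0 : x ≠ 0) (a L : ℕ)
    (b : ℤ) :
    ∑ k ∈ range (L + 1), x ^ ((k : ℤ) * (k + b)) * qBin x L k * qBin x a (k + b) =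
      qBin x (a + L) (b + L) := by
  induction L generalizing b with
  | zero => simp [qBin_zero_right hx le_rfl]
  | succ L ih =>
    have hshift : ∀ k ∈ range (L + 1),
        x ^ (((k + 1 : ℕ) : ℤ) * ((k + 1 : ℕ) + b)) *
            (x ^ ((L : ℤ) + 1 - (k + 1 : ℕ)) * qBin x L ((k + 1 : ℕ) - 1)) *
            qBin x a ((k + 1 : ℕ) + b) =
          x ^ (b + L + 1) *
            (x ^ ((k : ℤ) * (k + (b + 1))) * qBin x L k * qBin x a (k + (b + 1))) := by
      intro k _
      rw [show ((k + 1 : ℕ) : ℤ) * ((k + 1 : ℕ) + b) =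
          b + L + 1 + k * (k + (b + 1)) - ((L : ℤ) + 1 - (k + 1 : ℕ)) by push_cast; ring,
        zpow_sub₀ hx0, zpow_add₀ hx0, show ((k + 1 : ℕ) : ℤ) - 1 = k by push_cast; ring,
        show ((k + 1 : ℕ) : ℤ) + b = k + (b + 1) by push_cast; ring]
      field_simp
    have hfirst :
        ∑ k ∈ range (L + 1 + 1), x ^ ((k : ℤ) * (k + b)) * qBin x L k * qBin x a (k + b) =
          qBin x (a + L) (b + L) := by
      rw [sum_range_succ, qBin_of_lt (by simp), mul_zero, zero_mul, add_zero, ih]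
    have hsecond : ∑ k ∈ range (L + 1 + 1), x ^ ((k : ℤ) * (k + b)) *
          (x ^ ((L : ℤ) + 1 - k) * qBin x L (k - 1)) * qBin x a (k + b) =
        x ^ (b + L + 1) * qBin x (a + L) (b + L + 1) := by
      rw [sum_range_succ', sum_congr rfl hshift, ← mul_sum, ih, add_right_comm b 1, Nat.cast_zero,
        zero_sub, qBin_of_neg (k := -1) (by norm_num)]
      ring
    rw [Nat.cast_succ, ← add_assoc, ← add_assoc,
      qBin_add_one_left hx (n := a + L) (by positivity), add_sub_cancel_right, ← hfirst,
      ← hsecond, ← sum_add_distrib]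
    refine sum_congr rfl fun k _ => ?_
    rw [qBin_add_one_left' hx (Nat.cast_nonneg L)]
    ring

end GaussianBinomial

theorem qq_pow_ne_one (n : ℕ) : qq ^ (n + 1) ≠ 1 := by
  intro h
  have := congrArg RatFunc.intDegree h
  rw [qq, ← RatFunc.algebraMap_X, ← map_pow, RatFunc.intDegree_polynomial,
    RatFunc.intDegree_one, Polynomial.natDegree_X_pow] at this
  omega

theorem stmt14 (a L : ℕ) (b : ℤ) :
    ∑ k ∈ Finset.range (L + 1),
        qq ^ ((k : ℤ) * (k + b)) * qBin qq (L : ℤ) (k : ℤ) * qBin qq (a : ℤ) ((k : ℤ) + b) =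
      qBin qq ((a : ℤ) + L) (b + L) :=
  qBin_add_eq_sum qq_pow_ne_one RatFunc.X_ne_zero a L b
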